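/- arXiv:2310.18869 — 3 statements merged into one kernel-verified Lean document; each statement's English description precedes it below -/
import Mathlib

section
/- Let p be a prime and r ≥ 1 an integer, and regard M(p^r) as a matrix over ℚ. Then M(p^r) is invertible and the (i,j) entry of M(p^r)⁻¹ equals −p^{1−2r} − ((p−1)/(p+1))·r·p^{1−2r} if i = j, and equals −p^{1−2r} − (p^{2−3r}/(p+1))·(−p^{r−1} + ν_p(i−j)·p^{r−1}·(p−1)) if i ≠ j. -/
/-- `M(p^r)`: the `p^r × p^r` matrix over `ℚ` whose `(i,j)` entry is `−p^{2r−1}` if `i = j`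
and `p^{2ν_p(i−j)}` otherwise, where `ν_p` is the `p`-adic valuation. -/
def Mpr (p r : ℕ) : Matrix (Fin (p ^ r)) (Fin (p ^ r)) ℚ := fun i j =>
  if i = j then -(p : ℚ) ^ (2 * r - 1)
  else (p : ℚ) ^ (2 * padicValInt p ((i : ℤ) - (j : ℤ)))

/-!
Let `P v` be the operator averaging a function on `ℤ/p^r` over the residue classes modulo
`p ^ v`. Averaging over a finer partition and then a coarser one is averaging over the coarser
one, so `P v * P w = P (min v w)` for `v, w ≤ r`, and `P r = 1`. Hence the differences
`P m - P (m - 1)` (with `P (-1) = 0`) are complete orthogonal idempotents, and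
`∑ c m • (P m - P (m - 1))` is inverted by inverting every `c m`. Both `M(p^r)` and the claimed
inverse are of this form, since their entries depend only on `min r (ν_p (i - j))`: the
eigenvalues of `M(p^r)` are `-p^(r-1)` and `-(p + 1) p^(r+m-1)` for `0 ≤ m < r`, and a
geometric (respectively constant) sum recovers the entries from them.
-/

open Finset Matrix

section Chain

variable {R : Type*} [Ring R]

def chainDiff (P : ℕ → R) : ℕ → R
  | 0 => P 0
  | m + 1 => P (m + 1) - P m

theorem sum_range_chainDiff (P : ℕ → R) (n : ℕ) :
    ∑ m ∈ range (n + 1), chainDiff P m = P n := by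
  induction n with
  | zero => simp [chainDiff]
  | succ n ih => rw [sum_range_succ, ih, chainDiff, add_sub_cancel]

variable {P : ℕ → R} {r : ℕ} (hP : ∀ v ≤ r, ∀ w ≤ r, P v * P w = P (min v w))
include hP

theorem chainDiff_mul_of_mul_eq_min {m w : ℕ} (hm : m ≤ r) (hw : w ≤ r) :
    chainDiff P m * P w = if m ≤ w then chainDiff P m else 0 := by
  cases m with
  | zero => simp [chainDiff, hP 0 hm w hw]
  | succ m =>
    rw [chainDiff, sub_mul, hP _ hm _ hw, hP m (by omega) w hw]
    split_ifs with h
    · rw [min_eq_left h, min_eq_left (by omega)]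
    · rw [min_eq_right (by omega), min_eq_right (by omega), sub_self]

theorem chainDiff_mul_chainDiff {m n : ℕ} (hm : m ≤ r) (hn : n ≤ r) :
    chainDiff P m * chainDiff P n = if m = n then chainDiff P m else 0 := by
  cases n with
  | zero =>
    rw [chainDiff, chainDiff_mul_of_mul_eq_min hP hm hn]
    simp only [nonpos_iff_eq_zero]
  | succ n =>
    rw [chainDiff, mul_sub, chainDiff_mul_of_mul_eq_min hP hm hn,
      chainDiff_mul_of_mul_eq_min hP hm (by omega)]
    split_ifs <;> first | omega | simp

theorem sum_smul_chainDiff_mul_eq_one {K : Type*} [CommRing K] [Algebra K R] (hr : P r = 1)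
    {a b : ℕ → K} (hab : ∀ m ≤ r, a m * b m = 1) :
    (∑ m ∈ range (r + 1), a m • chainDiff P m) *
      (∑ n ∈ range (r + 1), b n • chainDiff P n) = 1 := by
  calc _ = ∑ m ∈ range (r + 1), ∑ n ∈ range (r + 1),
        if m = n then (a m * b n) • chainDiff P m else 0 := by
        rw [sum_mul_sum]
        refine sum_congr rfl fun m hm => sum_congr rfl fun n hn => ?_
        rw [smul_mul_smul, chainDiff_mul_chainDiff hP (by simpa [Nat.lt_succ_iff] using hm)
          (by simpa [Nat.lt_succ_iff] using hn), smul_ite, smul_zero]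
    _ = ∑ m ∈ range (r + 1), chainDiff P m := by
        refine sum_congr rfl fun m hm => ?_
        rw [sum_ite_eq, if_pos hm, hab m (by simpa [Nat.lt_succ_iff] using hm), one_smul]
    _ = 1 := by rw [sum_range_chainDiff, hr]

end Chain

theorem Fin.sum_ite_intCast_dvd_sub {n m : ℕ} (hm : 0 < m) (hmn : m ∣ n) (k : ℕ) :
    ∑ j : Fin n, (if (m : ℤ) ∣ (j : ℤ) - k then (1 : ℚ) else 0) = (n / m : ℕ) := by
  rw [Fin.sum_univ_eq_sum_range (fun j => if (m : ℤ) ∣ (j : ℤ) - k then (1 : ℚ) else 0),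
    sum_boole]
  congr 2
  have := Nat.count_modEq_card n hm k
  rw [Nat.count_eq_card_filter_range, Nat.mod_eq_zero_of_dvd hmn] at this
  simpa [Nat.modEq_iff_dvd, dvd_sub_comm] using this

theorem Fin.eq_of_intCast_dvd_sub {n : ℕ} {i j : Fin n} (h : (n : ℤ) ∣ (i : ℤ) - j) :
    i = j := by
  have hi : (i : ℤ) < n := by exact_mod_cast i.isLt
  have hj : (j : ℤ) < n := by exact_mod_cast j.isLt
  have := Int.eq_zero_of_abs_lt_dvd h (abs_lt.mpr ⟨by omega, by omega⟩)
  exact Fin.ext (by omega)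

theorem sum_range_mul_ite_pow_sub_ite_pow {K : Type*} [CommRing K] (x : K) (c : ℕ → K)
    {d r : ℕ} (hd : d ≤ r) :
    ∑ m ∈ range r,
        c (m + 1) * ((if m + 1 ≤ d then x ^ (m + 1) else 0) - if m ≤ d then x ^ m else 0)
      = (x - 1) * ∑ m ∈ range d, c (m + 1) * x ^ m -
        if d < r then c (d + 1) * x ^ d else 0 := by
  induction r, hd using Nat.le_induction with
  | base =>
    rw [if_neg (lt_irrefl d), sub_zero, mul_sum]
    refine sum_congr rfl fun m hm => ?_
    have := mem_range.mp hm
    rw [if_pos (by omega), if_pos (by omega)]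
    ring
  | succ n hdn ih =>
    rw [sum_range_succ, ih, if_neg (by omega : ¬ n + 1 ≤ d), if_pos (by omega : d < n + 1)]
    rcases hdn.eq_or_lt with rfl | hlt
    · rw [if_neg (lt_irrefl d), if_pos le_rfl]
      ring
    · rw [if_pos hlt, if_neg (by omega)]
      ring

section ResidueAverage

variable (p r : ℕ)

/-- Averaging over the residue classes modulo `p ^ v`. -/
def residueAverage (v : ℕ) : Matrix (Fin (p ^ r)) (Fin (p ^ r)) ℚ :=
  of fun i j => if (p : ℤ) ^ v ∣ (i : ℤ) - j then (p : ℚ) ^ v / (p : ℚ) ^ r else 0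

variable {p r}

theorem residueAverage_transpose (v : ℕ) : (residueAverage p r v)ᵀ = residueAverage p r v := by
  ext i j
  simp only [transpose_apply, residueAverage, of_apply, dvd_sub_comm]

theorem residueAverage_mul_of_le (hp : 0 < p) {v w : ℕ} (hvw : v ≤ w) (hw : w ≤ r) :
    residueAverage p r v * residueAverage p r w = residueAverage p r v := by
  ext i k
  have hcount := Fin.sum_ite_intCast_dvd_sub (pow_pos hp w) (pow_dvd_pow p hw) k
  push_cast at hcount
  have hpr : (p : ℚ) ^ w * (p : ℚ) ^ (r - w) = (p : ℚ) ^ r := by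
    rw [← pow_add, Nat.add_sub_cancel' hw]
  have hp0 : (p : ℚ) ^ r ≠ 0 := by positivity
  calc (residueAverage p r v * residueAverage p r w) i k
      = ∑ j : Fin (p ^ r), residueAverage p r v i k * ((p : ℚ) ^ w / (p : ℚ) ^ r) *
          (if (p : ℤ) ^ w ∣ (j : ℤ) - k then (1 : ℚ) else 0) := by
        rw [mul_apply]
        refine sum_congr rfl fun j _ => ?_
        simp only [residueAverage, of_apply]
        by_cases hjk : (p : ℤ) ^ w ∣ (j : ℤ) - k
        · have hjk' := (pow_dvd_pow (p : ℤ) hvw).trans hjk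
          have : (p : ℤ) ^ v ∣ (i : ℤ) - j ↔ (p : ℤ) ^ v ∣ (i : ℤ) - k := by
            rw [← sub_sub_sub_cancel_right (i : ℤ) j k, dvd_sub_left hjk']
          simp [hjk, this]
        · simp [hjk]
    _ = residueAverage p r v i k := by
        rw [← mul_sum, hcount, Nat.pow_div hw hp, Nat.cast_pow, mul_assoc, div_mul_eq_mul_div,
          hpr, div_self hp0, mul_one]

theorem residueAverage_mul (hp : 0 < p) {v w : ℕ} (hv : v ≤ r) (hw : w ≤ r) :
    residueAverage p r v * residueAverage p r w = residueAverage p r (min v w) := by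
  rcases le_total v w with hvw | hwv
  · rw [min_eq_left hvw, residueAverage_mul_of_le hp hvw hw]
  · rw [min_eq_right hwv, ← residueAverage_transpose v, ← residueAverage_transpose w,
      ← transpose_mul, residueAverage_mul_of_le hp hwv hv, residueAverage_transpose]

theorem residueAverage_self (hp : 0 < p) : residueAverage p r r = 1 := by
  ext i j
  by_cases hij : i = j
  · have : (p : ℚ) ≠ 0 := by exact_mod_cast hp.ne'
    subst hij
    simp [residueAverage, this]
  · have : ¬ (p : ℤ) ^ r ∣ (i : ℤ) - j := fun h =>
      hij (Fin.eq_of_intCast_dvd_sub (by exact_mod_cast h))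
    simp [residueAverage, hij, this]

end ResidueAverage

section Depth

variable {p r : ℕ}

theorem padicValInt_sub_lt [Fact p.Prime] {i j : Fin (p ^ r)} (hij : i ≠ j) :
    padicValInt p ((i : ℤ) - j) < r := by
  by_contra! h
  refine hij (Fin.eq_of_intCast_dvd_sub ?_)
  exact_mod_cast (padicValInt_dvd_iff r _).mpr (Or.inr h)

variable (p r) in
/-- `min r (ν_p (i - j))`; the diagonal is set to `r` by hand, where `padicValInt` gives `0`. -/
def depth (i j : Fin (p ^ r)) : ℕ := if i = j then r else padicValInt p ((i : ℤ) - j)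

theorem depth_self (i : Fin (p ^ r)) : depth p r i i = r := if_pos rfl

theorem depth_of_ne {i j : Fin (p ^ r)} (hij : i ≠ j) :
    depth p r i j = padicValInt p ((i : ℤ) - j) := if_neg hij

theorem depth_le [Fact p.Prime] (i j : Fin (p ^ r)) : depth p r i j ≤ r := by
  by_cases hij : i = j
  · rw [hij, depth_self]
  · rw [depth_of_ne hij]
    exact (padicValInt_sub_lt hij).le

theorem intCast_pow_dvd_sub_iff [Fact p.Prime] {v : ℕ} (hv : v ≤ r) (i j : Fin (p ^ r)) :
    (p : ℤ) ^ v ∣ (i : ℤ) - j ↔ v ≤ depth p r i j := by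
  by_cases hij : i = j
  · simp [hij, depth_self, hv]
  · have hne : (i : ℤ) - j ≠ 0 := fun h => hij (Fin.ext (by omega))
    simp [depth_of_ne hij, padicValInt_dvd_iff, hne]

theorem residueAverage_apply [Fact p.Prime] {v : ℕ} (hv : v ≤ r) (i j : Fin (p ^ r)) :
    residueAverage p r v i j =
      if v ≤ depth p r i j then (p : ℚ) ^ v / (p : ℚ) ^ r else 0 := by
  simp only [residueAverage, of_apply, intCast_pow_dvd_sub_iff hv]

end Depth

variable (p r) in
/-- The matrix acting by `c m` on the range of the idempotent `chainDiff (residueAverage p r) m`. -/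
def spectralMat (c : ℕ → ℚ) : Matrix (Fin (p ^ r)) (Fin (p ^ r)) ℚ :=
  ∑ m ∈ range (r + 1), c m • chainDiff (residueAverage p r) m

theorem spectralMat_apply_mul_pow {p r : ℕ} [Fact p.Prime] (c : ℕ → ℚ) (i j : Fin (p ^ r)) :
    spectralMat p r c i j * (p : ℚ) ^ r
      = c 0 + ((p : ℚ) - 1) * ∑ m ∈ range (depth p r i j), c (m + 1) * (p : ℚ) ^ m
        - if depth p r i j < r then c (depth p r i j + 1) * (p : ℚ) ^ depth p r i j else 0 := by
  have hp : (p : ℚ) ^ r ≠ 0 :=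
    pow_ne_zero r (Nat.cast_ne_zero.mpr (Fact.out : p.Prime).ne_zero)
  rw [add_sub_assoc, ← sum_range_mul_ite_pow_sub_ite_pow _ _ (depth_le i j), spectralMat,
    Matrix.sum_apply, sum_range_succ', add_mul, sum_mul, add_comm]
  congr 1
  · simp [chainDiff, residueAverage_apply (Nat.zero_le r), hp]
  · refine sum_congr rfl fun m hm => ?_
    have := mem_range.mp hm
    simp only [chainDiff, Matrix.smul_apply, Matrix.sub_apply, smul_eq_mul,
      residueAverage_apply (by omega : m + 1 ≤ r), residueAverage_apply (by omega : m ≤ r)]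
    split_ifs <;> field_simp <;> ring

def mprEigenvalue (p r : ℕ) : ℕ → ℚ
  | 0 => -(p : ℚ) ^ r / p
  | m + 1 => -((p : ℚ) + 1) * (p : ℚ) ^ (r + m) / p

theorem mprEigenvalue_ne_zero {p : ℕ} (hp : 0 < p) (r m : ℕ) : mprEigenvalue p r m ≠ 0 := by
  have hx : (p : ℚ) ≠ 0 := by exact_mod_cast hp.ne'
  have hx1 : (p : ℚ) + 1 ≠ 0 := by positivity
  cases m
  · exact div_ne_zero (neg_ne_zero.mpr (pow_ne_zero r hx)) hx
  · exact div_ne_zero (mul_ne_zero (neg_ne_zero.mpr hx1) (pow_ne_zero _ hx)) hx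

theorem sub_one_mul_sum_mprEigenvalue (p r d : ℕ) :
    ((p : ℚ) - 1) * ∑ m ∈ range d, mprEigenvalue p r (m + 1) * (p : ℚ) ^ m
      = -((p : ℚ) ^ (2 * d) - 1) * (p : ℚ) ^ r / p := by
  have h : ∀ m, mprEigenvalue p r (m + 1) * (p : ℚ) ^ m
      = -(((p : ℚ) + 1) * (p : ℚ) ^ r / p) * ((p : ℚ) ^ 2) ^ m := by
    intro m; simp only [mprEigenvalue]; ring
  simp_rw [h, ← mul_sum]
  rw [pow_mul, ← geom_sum_mul]
  ring

theorem sub_one_mul_sum_mprEigenvalue_inv {p : ℕ} (hp : 0 < p) (r d : ℕ) :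
    ((p : ℚ) - 1) * ∑ m ∈ range d, (mprEigenvalue p r (m + 1))⁻¹ * (p : ℚ) ^ m
      = -((p : ℚ) - 1) * d * p / (((p : ℚ) + 1) * (p : ℚ) ^ r) := by
  have : (p : ℚ) ≠ 0 := by exact_mod_cast hp.ne'
  have h : ∀ m, (mprEigenvalue p r (m + 1))⁻¹ * (p : ℚ) ^ m
      = -p / (((p : ℚ) + 1) * (p : ℚ) ^ r) := by
    intro m; simp only [mprEigenvalue]; field_simp; ring
  simp_rw [h, sum_const, card_range, nsmul_eq_mul]
  ring

theorem Mpr_eq_spectralMat {p r : ℕ} (hp : p.Prime) (hr : 1 ≤ r) :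
    Mpr p r = spectralMat p r (mprEigenvalue p r) := by
  have := Fact.mk hp
  have hx : (p : ℚ) ≠ 0 := by exact_mod_cast hp.ne_zero
  obtain ⟨s, rfl⟩ := Nat.exists_eq_add_of_le' hr
  ext i j
  refine mul_right_cancel₀ (pow_ne_zero (s + 1) hx) ?_
  rw [spectralMat_apply_mul_pow, add_sub_assoc, sub_one_mul_sum_mprEigenvalue]
  by_cases hij : i = j
  · rw [hij, depth_self, if_neg (lt_irrefl _)]
    simp only [Mpr, if_true, mprEigenvalue, show 2 * (s + 1) - 1 = 2 * s + 1 by omega]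
    field_simp
    ring
  · rw [depth_of_ne hij, if_pos (padicValInt_sub_lt hij)]
    simp only [Mpr, if_neg hij, mprEigenvalue]
    field_simp
    ring

theorem spectralMat_inv_mprEigenvalue_apply {p r : ℕ} (hp : p.Prime) (hr : 1 ≤ r)
    (i j : Fin (p ^ r)) :
    spectralMat p r (mprEigenvalue p r)⁻¹ i j =
      if i = j then
        -(p : ℚ) ^ (1 - 2 * (r : ℤ)) -
          (((p : ℚ) - 1) / ((p : ℚ) + 1)) * (r : ℚ) * (p : ℚ) ^ (1 - 2 * (r : ℤ))
      else
        -(p : ℚ) ^ (1 - 2 * (r : ℤ)) -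
          ((p : ℚ) ^ (2 - 3 * (r : ℤ)) / ((p : ℚ) + 1)) *
            (-(p : ℚ) ^ ((r : ℤ) - 1) +
              (padicValInt p ((i : ℤ) - (j : ℤ)) : ℚ) * (p : ℚ) ^ ((r : ℤ) - 1) *
                ((p : ℚ) - 1)) := by
  have := Fact.mk hp
  have hx : (p : ℚ) ≠ 0 := by exact_mod_cast hp.ne_zero
  have hx1 : (p : ℚ) + 1 ≠ 0 := by positivity
  obtain ⟨s, rfl⟩ := Nat.exists_eq_add_of_le' hr
  have e1 : (p : ℚ) ^ (1 - 2 * ((s + 1 : ℕ) : ℤ)) = ((p : ℚ) ^ (2 * s + 1))⁻¹ := by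
    rw [show 1 - 2 * ((s + 1 : ℕ) : ℤ) = -((2 * s + 1 : ℕ) : ℤ) by push_cast; ring,
      _root_.zpow_neg, zpow_natCast]
  have e2 : (p : ℚ) ^ (2 - 3 * ((s + 1 : ℕ) : ℤ)) = ((p : ℚ) ^ (3 * s + 1))⁻¹ := by
    rw [show 2 - 3 * ((s + 1 : ℕ) : ℤ) = -((3 * s + 1 : ℕ) : ℤ) by push_cast; ring,
      _root_.zpow_neg, zpow_natCast]
  have e3 : (p : ℚ) ^ (((s + 1 : ℕ) : ℤ) - 1) = (p : ℚ) ^ s := by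
    rw [show ((s + 1 : ℕ) : ℤ) - 1 = (s : ℤ) by push_cast; ring, zpow_natCast]
  rw [e1, e2, e3]
  refine mul_right_cancel₀ (pow_ne_zero (s + 1) hx) ?_
  rw [spectralMat_apply_mul_pow]
  simp only [Pi.inv_apply]
  rw [add_sub_assoc, sub_one_mul_sum_mprEigenvalue_inv hp.pos]
  by_cases hij : i = j
  · rw [hij, depth_self, if_neg (lt_irrefl _), if_pos rfl]
    simp only [mprEigenvalue]
    field_simp
    ring
  · rw [depth_of_ne hij, if_pos (padicValInt_sub_lt hij), if_neg hij]
    simp only [mprEigenvalue]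
    field_simp
    ring

/-- For a prime `p` and `r ≥ 1`, `M(p^r)` is invertible over `ℚ`, with
`(M(p^r)⁻¹)_{ij}` equal to `−p^{1−2r} − ((p−1)/(p+1))·r·p^{1−2r}` if `i = j`, and to
`−p^{1−2r} − (p^{2−3r}/(p+1))·(−p^{r−1} + ν_p(i−j)·p^{r−1}·(p−1))` otherwise. -/
theorem stmt11 (p r : ℕ) (hp : p.Prime) (hr : 1 ≤ r) :
    IsUnit (Mpr p r) ∧
    ∀ i j : Fin (p ^ r), (Mpr p r)⁻¹ i j =
      if i = j then
        -(p : ℚ) ^ (1 - 2 * (r : ℤ)) -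
          (((p : ℚ) - 1) / ((p : ℚ) + 1)) * (r : ℚ) * (p : ℚ) ^ (1 - 2 * (r : ℤ))
      else
        -(p : ℚ) ^ (1 - 2 * (r : ℤ)) -
          ((p : ℚ) ^ (2 - 3 * (r : ℤ)) / ((p : ℚ) + 1)) *
            (-(p : ℚ) ^ ((r : ℤ) - 1) +
              (padicValInt p ((i : ℤ) - (j : ℤ)) : ℚ) * (p : ℚ) ^ ((r : ℤ) - 1) *
                ((p : ℚ) - 1)) := by
  have hinv : Mpr p r * spectralMat p r (mprEigenvalue p r)⁻¹ = 1 := by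
    rw [Mpr_eq_spectralMat hp hr]
    exact sum_smul_chainDiff_mul_eq_one (fun v hv w hw => residueAverage_mul hp.pos hv hw)
      (residueAverage_self hp.pos) fun m _ => mul_inv_cancel₀ (mprEigenvalue_ne_zero hp.pos r m)
  refine ⟨(isUnit_iff_isUnit_det _).mpr (isUnit_det_of_right_inverse hinv), fun i j => ?_⟩
  rw [inv_eq_right_inv hinv]
  exact spectralMat_inv_mprEigenvalue_apply hp hr i j
end

section
/- Let p be a prime and r ≥ 1 an integer, and let A' = (M(p^r)_{1̂,1̂})⁻¹, where M(p^r)_{1̂,1̂} is the (p^r−1)×(p^r−1) matrix over ℚ obtained from M(p^r) by deleting the row and column indexed by 0, with remaining rows and columns indexed by {1, …, p^r−1}. Then for every i ∈ {1, …, p^r−1}, the i-th row sum satisfies Σ_{j=1}^{p^r−1} A'_{ij} = p^{1−r}·(−pr + r − 1)/((p−1)r + p + 1) + (p^{1−r}·(p−1)/((p−1)r + p + 1))·ν_p(i). Moreover, the sum of all entries of A' equals −(p−1)·p·r/((p−1)r + p + 1). -/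
/-- `M(p^r)_{1̂,1̂}`: the matrix obtained from `M(p^r)` by deleting the row and column
indexed by `0`, with remaining rows and columns indexed by `{1, …, p^r−1}`. -/
def MprSub (p r : ℕ) :
    Matrix {i : Fin (p ^ r) // (i : ℕ) ≠ 0} {i : Fin (p ^ r) // (i : ℕ) ≠ 0} ℚ :=
  (Mpr p r).submatrix Subtype.val Subtype.val

/-!
Write `ν = ν_p` and `M = M(p^r)`. The sum of row `i` of `M` over the ball `{j : p^t ∣ i - j}` is
`-p^{r+t-1}`, by downward induction on `t`: for `t = r` the ball is `{i}`, and the shell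
`ν(i - j) = t` has `p^{r-t} - p^{r-t-1}` elements, on which `M i j = p^{2t}`. For `t = 0` this is
the full row sum `-p^{r-1}`.

Writing `ν(j) = #{1 ≤ t < r : p^t ∣ j}` for `0 < j < p^r` turns the `ν`-weighted row sums into
sums over the sets of multiples of `p^t`: for `t ≤ ν(i)` such a set is a ball around `i`, and for
`t > ν(i)` the entry `M i j = p^{2ν(i)}` is constant on it. Removing the index `0` gives the row
sums and the `ν`-weighted row sums of `M_{1̂,1̂}`, and with them `M_{1̂,1̂} w = 1` for the affine
function `w i = a + b ν(i)` of the statement. Since `M_{1̂,1̂}` has positive off-diagonal entries and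
negative row sums it is invertible, so `w` is the vector of row sums of its inverse.
-/

open Finset

theorem Fin.card_filter_modEq {n m : ℕ} (hm : 0 < m) (hmn : m ∣ n) (c : ℕ) :
    #{j : Fin n | (j : ℕ) ≡ c [MOD m]} = n / m := by
  rw [card_filter, Fin.sum_univ_eq_sum_range (fun j => if j ≡ c [MOD m] then 1 else 0),
    ← card_filter, ← Nat.count_eq_card_filter_range, Nat.count_modEq_card _ hm,
    Nat.mod_eq_zero_of_dvd hmn]
  simp

theorem Fin.sum_subtype_val_ne_zero {M : Type*} [AddCommGroup M] {n : ℕ} [NeZero n]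
    (f : Fin n → M) : ∑ j : {j : Fin n // (j : ℕ) ≠ 0}, f j = ∑ j, f j - f 0 := by
  rw [← sum_erase_eq_sub (mem_univ 0)]
  exact (sum_subtype _ (fun j => by
    simp only [mem_erase, mem_univ, and_true, ne_eq, Fin.ext_iff, Fin.val_zero]) f).symm

theorem geom_sum_Ico_reflect_mul {R : Type*} [CommRing R] (x : R) {a b : ℕ} (hab : a ≤ b) :
    (∑ t ∈ Ico a b, x ^ (b - t)) * (x - 1) = x ^ (b + 1 - a) - x := by
  rw [sum_Ico_reflect _ _ (by omega), Nat.add_sub_cancel_left, geom_sum_Ico_mul _ (by omega),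
    pow_one]

theorem padicValInt_eq_of_dvd_of_not_dvd {p : ℕ} [Fact p.Prime] {z : ℤ} {v : ℕ}
    (h : (p : ℤ) ^ v ∣ z) (h' : ¬(p : ℤ) ^ (v + 1) ∣ z) : padicValInt p z = v := by
  have hz : z ≠ 0 := by rintro rfl; exact h' (dvd_zero _)
  rw [padicValInt_dvd_iff] at h h'
  omega

theorem padicValNat_lt_of_lt_pow {p r a : ℕ} (ha : a ≠ 0) (h : a < p ^ r) :
    padicValNat p a < r :=
  (padicValNat_le_nat_log a).trans_lt (Nat.log_lt_of_lt_pow ha h)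

theorem padicValNat_eq_card_pow_dvd {p r a : ℕ} (hp : p.Prime) (ha : a ≠ 0) (h : a < p ^ r) :
    padicValNat p a = #{t ∈ Ico 1 r | p ^ t ∣ a} := by
  rw [← Nat.factorization_def a hp, Nat.factorization_eq_card_pow_dvd_of_lt hp (by omega) h]

open Matrix in
theorem Matrix.sum_inv_apply_eq_of_mulVec_eq_one {n K : Type*} [Fintype n] [DecidableEq n]
    [CommRing K] {A : Matrix n n K} (hA : IsUnit A) {w : n → K} (h : A *ᵥ w = 1) (i : n) :
    ∑ j, A⁻¹ i j = w i := by
  have hw : A⁻¹ *ᵥ 1 = w := by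
    rw [← h, mulVec_mulVec, nonsing_inv_mul _ ((isUnit_iff_isUnit_det A).1 hA), one_mulVec]
  simpa [mulVec, dotProduct] using congrFun hw i

section PowDvd

variable {p r : ℕ}

theorem card_filter_pow_dvd_sub [NeZero p] (c : ℕ) {s : ℕ} (hs : s ≤ r) :
    #{j : Fin (p ^ r) | (p : ℤ) ^ s ∣ c - j} = p ^ (r - s) := by
  have hp := Nat.pos_of_neZero p
  simp_rw [← Nat.cast_pow, ← Nat.modEq_iff_dvd]
  rw [Fin.card_filter_modEq (pow_pos hp s) (pow_dvd_pow p hs), Nat.pow_div hs hp]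

theorem card_filter_pow_dvd [NeZero p] {s : ℕ} (hs : s ≤ r) :
    #{j : Fin (p ^ r) | p ^ s ∣ (j : ℕ)} = p ^ (r - s) := by
  have hp := Nat.pos_of_neZero p
  simp_rw [← Nat.modEq_zero_iff_dvd]
  rw [Fin.card_filter_modEq (pow_pos hp s) (pow_dvd_pow p hs), Nat.pow_div hs hp]

theorem sum_subtype_ne_zero_mul_padicValNat [Fact p.Prime] (f : Fin (p ^ r) → ℚ) :
    ∑ j : {j : Fin (p ^ r) // (j : ℕ) ≠ 0}, f j * padicValNat p j =
      ∑ t ∈ Ico 1 r, (∑ j ∈ {j : Fin (p ^ r) | p ^ t ∣ (j : ℕ)}, f j - f 0) := by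
  have hexpand (j : {j : Fin (p ^ r) // (j : ℕ) ≠ 0}) : f j * padicValNat p j =
      ∑ t ∈ Ico 1 r, if p ^ t ∣ (j : ℕ) then f j else 0 := by
    rw [padicValNat_eq_card_pow_dvd Fact.out j.2 j.1.isLt, card_filter, Nat.cast_sum, mul_sum]
    simp
  simp_rw [hexpand]
  rw [Fin.sum_subtype_val_ne_zero (fun j => ∑ t ∈ Ico 1 r, if p ^ t ∣ (j : ℕ) then f j else 0),
    sum_comm]
  simp only [Fin.val_zero, dvd_zero, ite_true, ← sum_filter, sum_sub_distrib]

theorem sum_subtype_ne_zero_padicValNat [Fact p.Prime] (hr : 1 ≤ r) :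
    ∑ j : {j : Fin (p ^ r) // (j : ℕ) ≠ 0}, (padicValNat p j : ℚ) =
      ((p : ℚ) ^ r - p) / ((p : ℚ) - 1) - ((r : ℚ) - 1) := by
  have hp1 : (p : ℚ) - 1 ≠ 0 := sub_ne_zero.2 (by exact_mod_cast (Fact.out : p.Prime).ne_one)
  have h := sum_subtype_ne_zero_mul_padicValNat (p := p) (r := r) (fun _ => 1)
  simp only [one_mul, sum_const, nsmul_one] at h
  rw [h, sum_sub_distrib, sum_const, Nat.card_Ico, nsmul_one, Nat.cast_sub hr, Nat.cast_one,
    sum_congr rfl fun t ht => by rw [card_filter_pow_dvd (mem_Ico.1 ht).2.le, Nat.cast_pow]]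
  congr 1
  rw [eq_div_iff hp1, geom_sum_Ico_reflect_mul _ hr, Nat.add_sub_cancel]

end PowDvd

namespace Mpr

variable {p r : ℕ}

theorem apply_self (i : Fin (p ^ r)) : Mpr p r i i = -(p : ℚ) ^ (2 * r - 1) := if_pos rfl

theorem apply_of_ne {i j : Fin (p ^ r)} (h : i ≠ j) :
    Mpr p r i j = (p : ℚ) ^ (2 * padicValInt p (i - j)) := if_neg h

theorem pow_dvd_sub_iff (i j : Fin (p ^ r)) : (p : ℤ) ^ r ∣ (i : ℤ) - j ↔ i = j := by
  refine ⟨fun h => Fin.ext ?_, fun h => by simp [h]⟩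
  have hi : ((i : ℕ) : ℤ) < (p : ℤ) ^ r := by exact_mod_cast i.isLt
  have hj : ((j : ℕ) : ℤ) < (p : ℤ) ^ r := by exact_mod_cast j.isLt
  have := Int.eq_zero_of_abs_lt_dvd h (by rw [abs_lt]; omega)
  omega

variable [Fact p.Prime]

theorem sum_filter_pow_dvd_sub (i : Fin (p ^ r)) {t : ℕ} (ht : t ≤ r) :
    ∑ j ∈ {j : Fin (p ^ r) | (p : ℤ) ^ t ∣ i - j}, Mpr p r i j = -(p : ℚ) ^ (r + t - 1) := by
  induction ht using Nat.decreasingInduction with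
  | self =>
    simp_rw [pow_dvd_sub_iff, filter_eq, mem_univ, if_true, sum_singleton, apply_self, two_mul]
  | of_succ t ht ih =>
    set ball : ℕ → Finset (Fin (p ^ r)) := fun s => {j : Fin (p ^ r) | (p : ℤ) ^ s ∣ i - j}
    set inner : Fin (p ^ r) → Prop := fun j => (p : ℤ) ^ (t + 1) ∣ i - j
    have hinner : (ball t).filter inner = ball (t + 1) := by
      ext j
      simp only [ball, inner, mem_filter, mem_univ, true_and, and_iff_right_iff_imp]
      exact (pow_dvd_pow _ t.le_succ).trans
    have hshell : ∀ j ∈ (ball t).filter (¬inner ·), Mpr p r i j = (p : ℚ) ^ (2 * t) := by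
      intro j hj
      simp only [ball, inner, mem_filter, mem_univ, true_and] at hj
      have hij : i ≠ j := by rintro rfl; simp at hj
      rw [apply_of_ne hij, padicValInt_eq_of_dvd_of_not_dvd hj.1 hj.2]
    have hcard : (#((ball t).filter (¬inner ·)) : ℚ) =
        (p : ℚ) ^ (r - t) - (p : ℚ) ^ (r - (t + 1)) := by
      have h := card_filter_add_card_filter_not (s := ball t) inner
      rw [hinner, card_filter_pow_dvd_sub _ ht.le, card_filter_pow_dvd_sub _ ht] at h
      rw [eq_sub_iff_add_eq']
      exact_mod_cast h
    change ∑ j ∈ ball t, Mpr p r i j = _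
    rw [← sum_filter_add_sum_filter_not _ inner, hinner, ih, sum_congr rfl hshell, sum_const,
      nsmul_eq_mul, hcard]
    obtain ⟨k, rfl⟩ : ∃ k, r = t + 1 + k := ⟨r - (t + 1), by omega⟩
    rw [show t + 1 + k + (t + 1) - 1 = 2 * t + k + 1 by omega,
      show t + 1 + k - t = k + 1 by omega, show t + 1 + k - (t + 1) = k by omega,
      show t + 1 + k + t - 1 = 2 * t + k by omega]
    ring

theorem sum_row (i : Fin (p ^ r)) : ∑ j, Mpr p r i j = -(p : ℚ) ^ (r - 1) := by
  simpa using sum_filter_pow_dvd_sub i (Nat.zero_le r)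

theorem apply_zero {i : Fin (p ^ r)} (hi : (i : ℕ) ≠ 0) :
    Mpr p r i 0 = (p : ℚ) ^ (2 * padicValNat p i) := by
  rw [apply_of_ne (fun h => hi (by simp [h])), Fin.val_zero, Nat.cast_zero, sub_zero,
    padicValInt.of_nat]

theorem sum_filter_pow_dvd_of_le {i : Fin (p ^ r)} (hi : (i : ℕ) ≠ 0) {t : ℕ}
    (ht : t ≤ padicValNat p i) :
    ∑ j ∈ {j : Fin (p ^ r) | p ^ t ∣ (j : ℕ)}, Mpr p r i j = -(p : ℚ) ^ (r + t - 1) := by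
  have hti : (p : ℤ) ^ t ∣ i := by exact_mod_cast (padicValNat_dvd_iff_le hi).2 ht
  rw [← sum_filter_pow_dvd_sub i (ht.trans (padicValNat_lt_of_lt_pow hi i.isLt).le)]
  refine sum_congr (filter_congr fun j _ => ?_) fun _ _ => rfl
  rw [dvd_sub_right hti]
  exact_mod_cast Iff.rfl

theorem sum_filter_pow_dvd_of_lt {i : Fin (p ^ r)} (hi : (i : ℕ) ≠ 0) {t : ℕ}
    (ht : padicValNat p i < t) (htr : t ≤ r) :
    ∑ j ∈ {j : Fin (p ^ r) | p ^ t ∣ (j : ℕ)}, Mpr p r i j =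
      (p : ℚ) ^ (r - t) * (p : ℚ) ^ (2 * padicValNat p i) := by
  set v := padicValNat p i
  have hdvd (n : ℕ) : (p : ℤ) ^ n ∣ i ↔ n ≤ v := by
    rw [← padicValNat_dvd_iff_le hi]; exact_mod_cast Iff.rfl
  have hentry : ∀ j ∈ ({j : Fin (p ^ r) | p ^ t ∣ (j : ℕ)} : Finset _),
      Mpr p r i j = (p : ℚ) ^ (2 * v) := by
    intro j hj
    have hj : (p : ℤ) ^ t ∣ j := by exact_mod_cast (mem_filter.1 hj).2
    have hsub (n : ℕ) (hn : n ≤ t) : (p : ℤ) ^ n ∣ (i : ℤ) - j ↔ n ≤ v := by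
      rw [dvd_sub_left ((pow_dvd_pow _ hn).trans hj), hdvd]
    have hij : i ≠ j := by
      rintro rfl; exact absurd ((hdvd t).1 hj) (by omega)
    rw [apply_of_ne hij,
      padicValInt_eq_of_dvd_of_not_dvd ((hsub v ht.le).2 le_rfl) (by rw [hsub _ ht]; omega)]
  rw [sum_congr rfl hentry, sum_const, card_filter_pow_dvd htr, nsmul_eq_mul, Nat.cast_pow]

theorem sum_Ico_sum_filter_pow_dvd {i : Fin (p ^ r)} (hi : (i : ℕ) ≠ 0) :
    ∑ t ∈ Ico 1 r, ∑ j ∈ {j : Fin (p ^ r) | p ^ t ∣ (j : ℕ)}, Mpr p r i j =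
      ((p : ℚ) ^ r - (p : ℚ) ^ (2 * padicValNat p i + 1)) / ((p : ℚ) - 1) := by
  set v := padicValNat p i
  have hv : v < r := padicValNat_lt_of_lt_pow hi i.isLt
  have hp1 : (p : ℚ) - 1 ≠ 0 := sub_ne_zero.2 (by exact_mod_cast (Fact.out : p.Prime).ne_one)
  have hlow : ∑ t ∈ Ico 1 (v + 1), ∑ j ∈ {j : Fin (p ^ r) | p ^ t ∣ (j : ℕ)}, Mpr p r i j =
      -((p : ℚ) ^ (r - 1) * ∑ t ∈ Ico 1 (v + 1), (p : ℚ) ^ t) := by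
    rw [mul_sum, ← sum_neg_distrib]
    refine sum_congr rfl fun t ht => ?_
    rw [sum_filter_pow_dvd_of_le hi (Nat.le_of_lt_succ (mem_Ico.1 ht).2), ← pow_add,
      show r + t - 1 = r - 1 + t by omega]
  have hhigh : ∑ t ∈ Ico (v + 1) r, ∑ j ∈ {j : Fin (p ^ r) | p ^ t ∣ (j : ℕ)}, Mpr p r i j =
      (p : ℚ) ^ (2 * v) * ∑ t ∈ Ico (v + 1) r, (p : ℚ) ^ (r - t) := by
    rw [mul_sum]
    refine sum_congr rfl fun t ht => ?_
    simp only [mem_Ico] at ht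
    rw [sum_filter_pow_dvd_of_lt hi ht.1 ht.2.le, mul_comm]
  rw [eq_div_iff hp1, ← sum_Ico_consecutive _ (by omega : 1 ≤ v + 1) hv, hlow, hhigh, add_mul,
    neg_mul, mul_assoc, mul_assoc, geom_sum_Ico_mul _ (by omega), geom_sum_Ico_reflect_mul _ hv]
  obtain ⟨k, hk⟩ : ∃ k, r = v + 1 + k := ⟨r - (v + 1), by omega⟩
  rw [show r - 1 = v + k by omega, show r + 1 - (v + 1) = k + 1 by omega, hk]
  ring

end Mpr

/-- The claimed row sum of `(M(p^r)_{1̂,1̂})⁻¹` at an index `i` with `ν_p(i) = v`. -/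
def invRowSum (p r v : ℕ) : ℚ :=
  (p : ℚ) ^ (1 - (r : ℤ)) * (-(p : ℚ) * r + r - 1) / (((p : ℚ) - 1) * r + p + 1) +
    ((p : ℚ) ^ (1 - (r : ℤ)) * ((p : ℚ) - 1) / (((p : ℚ) - 1) * r + p + 1)) * v

theorem sum_mul_invRowSum {ι : Type*} [Fintype ι] (p r : ℕ) (c : ι → ℚ) (ν : ι → ℕ) :
    ∑ j, c j * invRowSum p r (ν j) =
      invRowSum p r 0 * ∑ j, c j + (invRowSum p r 1 - invRowSum p r 0) * ∑ j, c j * ν j := by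
  simp only [invRowSum, mul_sum, ← sum_add_distrib]
  exact sum_congr rfl fun j _ => by ring

namespace MprSub

open Matrix

variable {p r : ℕ} [Fact p.Prime]

theorem sum_row (i : {i : Fin (p ^ r) // (i : ℕ) ≠ 0}) :
    ∑ j, MprSub p r i j = -(p : ℚ) ^ (r - 1) - (p : ℚ) ^ (2 * padicValNat p i) := by
  rw [show ∑ j, MprSub p r i j = ∑ j : {j : Fin (p ^ r) // (j : ℕ) ≠ 0}, Mpr p r i j from rfl,
    Fin.sum_subtype_val_ne_zero, Mpr.sum_row, Mpr.apply_zero i.2]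

theorem sum_mul_padicValNat (i : {i : Fin (p ^ r) // (i : ℕ) ≠ 0}) :
    ∑ j, MprSub p r i j * padicValNat p j =
      ((p : ℚ) ^ r - (p : ℚ) ^ (2 * padicValNat p i + 1)) / ((p : ℚ) - 1) -
        ((r : ℚ) - 1) * (p : ℚ) ^ (2 * padicValNat p i) := by
  have hr : 1 ≤ r := Nat.one_le_of_lt (padicValNat_lt_of_lt_pow i.2 i.1.isLt)
  rw [show ∑ j, MprSub p r i j * padicValNat p j =
      ∑ j : {j : Fin (p ^ r) // (j : ℕ) ≠ 0}, Mpr p r i j * padicValNat p j from rfl,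
    sum_subtype_ne_zero_mul_padicValNat, sum_sub_distrib, Mpr.sum_Ico_sum_filter_pow_dvd i.2,
    Mpr.apply_zero i.2, sum_const, Nat.card_Ico, nsmul_eq_mul, Nat.cast_sub hr, Nat.cast_one]

theorem isUnit : IsUnit (MprSub p r) := by
  have hp : (0 : ℚ) < p := by exact_mod_cast (Fact.out : p.Prime).pos
  have hoff : Pairwise fun i j => (-MprSub p r) i j < 0 := fun i j hij => by
    simp only [Matrix.neg_apply, MprSub, submatrix_apply,
      Mpr.apply_of_ne (Subtype.val_injective.ne hij), neg_lt_zero]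
    positivity
  have hrow (i) : 0 < ∑ j, (-MprSub p r) i j := by
    simp only [Matrix.neg_apply, sum_neg_distrib, sum_row]
    linarith [pow_pos hp (r - 1), pow_pos hp (2 * padicValNat p i)]
  have hdet := det_ne_zero_of_sum_row_pos hoff hrow
  rw [det_neg] at hdet
  exact (isUnit_iff_isUnit_det _).2 (isUnit_iff_ne_zero.2 (right_ne_zero_of_mul hdet))

theorem mulVec_invRowSum : MprSub p r *ᵥ (fun i => invRowSum p r (padicValNat p i)) = 1 := by
  ext i
  have hv := padicValNat_lt_of_lt_pow i.2 i.1.isLt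
  have hp : (1 : ℚ) < p := by exact_mod_cast (Fact.out : p.Prime).one_lt
  have hp1 : (p : ℚ) - 1 ≠ 0 := by linarith
  rw [mulVec, dotProduct, sum_mul_invRowSum, sum_row, sum_mul_padicValNat, Pi.one_apply]
  simp only [invRowSum, Nat.cast_zero, Nat.cast_one]
  rw [zpow_sub₀ (by positivity), zpow_one, zpow_natCast,
    pow_sub₀ _ (by positivity) (show 1 ≤ r by omega), pow_one]
  set D := ((p : ℚ) - 1) * r + p + 1 with hD_def
  have hD : D ≠ 0 := by positivity
  field_simp
  rw [hD_def]
  ring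

end MprSub

theorem sum_invRowSum {p r : ℕ} [Fact p.Prime] (hr : 1 ≤ r) :
    ∑ i : {i : Fin (p ^ r) // (i : ℕ) ≠ 0}, invRowSum p r (padicValNat p i) =
      -(((p : ℚ) - 1) * p * r) / (((p : ℚ) - 1) * r + p + 1) := by
  have hp : (1 : ℚ) < p := by exact_mod_cast (Fact.out : p.Prime).one_lt
  have hp1 : (p : ℚ) - 1 ≠ 0 := by linarith
  have h := sum_mul_invRowSum p r (fun _ : {i : Fin (p ^ r) // (i : ℕ) ≠ 0} => 1)
    (fun i => padicValNat p i)
  simp only [one_mul] at h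
  rw [h, sum_subtype_ne_zero_padicValNat hr, Fin.sum_subtype_val_ne_zero (fun _ => (1 : ℚ)),
    sum_const, card_univ, Fintype.card_fin, nsmul_one]
  simp only [invRowSum, Nat.cast_zero, Nat.cast_one, Nat.cast_pow]
  rw [zpow_sub₀ (by positivity), zpow_one, zpow_natCast]
  set D := ((p : ℚ) - 1) * r + p + 1
  have hD : D ≠ 0 := by positivity
  field_simp
  ring

/-- Let `A' = (M(p^r)_{1̂,1̂})⁻¹`. For every `i ∈ {1, …, p^r−1}`, the `i`-th
row sum of `A'` equals
`p^{1−r}·(−pr + r − 1)/((p−1)r + p + 1) + (p^{1−r}·(p−1)/((p−1)r + p + 1))·ν_p(i)`, and the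
sum of all entries of `A'` equals `−(p−1)·p·r/((p−1)r + p + 1)`. -/
theorem stmt14 (p r : ℕ) (hp : p.Prime) (hr : 1 ≤ r) :
    IsUnit (MprSub p r) ∧
    (∀ i : {i : Fin (p ^ r) // (i : ℕ) ≠ 0},
      ∑ j : {i : Fin (p ^ r) // (i : ℕ) ≠ 0}, (MprSub p r)⁻¹ i j =
        (p : ℚ) ^ (1 - (r : ℤ)) * (-(p : ℚ) * r + r - 1) / (((p : ℚ) - 1) * r + p + 1) +
          ((p : ℚ) ^ (1 - (r : ℤ)) * ((p : ℚ) - 1) / (((p : ℚ) - 1) * r + p + 1)) *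
            (padicValNat p (i.1 : ℕ) : ℚ)) ∧
    (∑ i : {i : Fin (p ^ r) // (i : ℕ) ≠ 0},
        ∑ j : {i : Fin (p ^ r) // (i : ℕ) ≠ 0}, (MprSub p r)⁻¹ i j =
      -(((p : ℚ) - 1) * p * r) / (((p : ℚ) - 1) * r + p + 1)) := by
  have := Fact.mk hp
  have hrow := Matrix.sum_inv_apply_eq_of_mulVec_eq_one MprSub.isUnit
    (MprSub.mulVec_invRowSum (p := p) (r := r))
  exact ⟨MprSub.isUnit, hrow, (sum_congr rfl fun i _ => hrow i).trans (sum_invRowSum hr)⟩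
end

section
/- Let p be a prime and r ≥ 1 an integer. Then T₀ is invertible over ℚ, and its inverse has the following entries: (1) for rows and columns both in the first block, indexed by i, j ∈ {1, …, p^r−1}: if i = j the entry is −2p^{1−2r}(pr−r+1)/(p+1) + 2p^{1−2r}(p−1)·ν_p(i)/(p+1), and if i ≠ j the entry is −p^{1−2r}(pr−r+1)/(p+1) − (p^{1−2r}(p−1)/(p+1))·(ν_p(i−j) − ν_p(i) − ν_p(j)); (2) for a row in the first block indexed by i ∈ {1, …, p^r−1} and a column in the second block, the entry is −p^{1−2r}(pr−r+1)/(p+1) + p^{1−2r}(p−1)·ν_p(i)/(p+1); (3) for a row in the second block and a column in the first block indexed by j ∈ {1, …, p^r−1}, the entry is −p^{1−2r}(pr−r+1)/(p+1) + p^{1−2r}(p−1)·ν_p(j)/(p+1); (4) for rows and columns both in the second block, indexed by i, j ∈ {0, …, p^{r−1}−1}: if i = j the entry is −2p^{1−2r}(pr−r+1)/(p+1), and if i ≠ j the entry is −p^{1−2r}(pr+p−r)/(p+1) − p^{1−2r}(p−1)·ν_p(i−j)/(p+1). -/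
/-- `B`: the `p^{r−1} × p^{r−1}` matrix whose diagonal entries equal `−p^{2r−1}` and whose
off-diagonal `(i,j)` entries equal `p^{2ν_p(i−j)+2}`. -/
def Bmat (p r : ℕ) : Matrix (Fin (p ^ (r - 1))) (Fin (p ^ (r - 1))) ℚ := fun i j =>
  if i = j then -(p : ℚ) ^ (2 * r - 1)
  else (p : ℚ) ^ (2 * padicValInt p ((i : ℤ) - (j : ℤ)) + 2)

/-- `T₀`: the block matrix `[[M(p^r)_{1̂,1̂}, 𝟏], [𝟏, B]]`, where `𝟏` denotes all-ones
blocks of the appropriate sizes. -/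
def T0 (p r : ℕ) :
    Matrix ({i : Fin (p ^ r) // (i : ℕ) ≠ 0} ⊕ Fin (p ^ (r - 1)))
      ({i : Fin (p ^ r) // (i : ℕ) ≠ 0} ⊕ Fin (p ^ (r - 1))) ℚ :=
  Matrix.fromBlocks (MprSub p r) (Matrix.of fun _ _ => 1) (Matrix.of fun _ _ => 1) (Bmat p r)

/-!
Read the indices of `T₀` in `ℤ/p^r` and `ℤ/p^{r-1}`. There `M(p^r)` and `B` are convolutions with
the weight `w(d) = p^{2ν(d)}` (`w(0) = 0`) minus a multiple of the identity, and the claimed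
inverse, scaled by `p^{2r-1}(p+1)`, is affine in `ν(x)`, `ν(y)`, `ν(x - y)` plus a multiple of the
identity. Each of the four blocks of `T₀ S = p^{2r-1}(p+1) · 1` thus reduces to three sums over
`ℤ/p^N`: `∑ ν`, `∑ w` and the convolution `∑ₖ w(e - k) ν(k)`. These are computed by induction on
`N`, splitting `ℤ/p^{N+1}` into the units, where `ν = 0` and `w = 1`, and the multiples of `p`,
the image of `ℤ/p^N` under multiplication by `p`, on which `ν` grows by `1` and `w` by `p²`.
-/

open Finset

variable {p : ℕ}

section Valuation

theorem padicValInt_le_of_dvd_sub [Fact p.Prime] {N : ℕ} {a b : ℤ} (hab : (p : ℤ) ^ N ∣ a - b)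
    (ha : ¬ (p : ℤ) ^ N ∣ a) : padicValInt p a ≤ padicValInt p b := by
  have hb : b ≠ 0 := by rintro rfl; exact ha (by simpa using hab)
  have hlt : padicValInt p a < N := by
    by_contra! hle
    exact ha ((padicValInt_dvd_iff N a).2 (Or.inr hle))
  have hdvd : (p : ℤ) ^ padicValInt p a ∣ b := by
    have h := dvd_sub (padicValInt_dvd a) ((pow_dvd_pow _ hlt.le).trans hab)
    rwa [sub_sub_cancel] at h
  exact ((padicValInt_dvd_iff _ b).1 hdvd).resolve_left hb

theorem padicValInt_eq_of_dvd_sub [Fact p.Prime] {N : ℕ} {a b : ℤ} (hab : (p : ℤ) ^ N ∣ a - b)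
    (ha : ¬ (p : ℤ) ^ N ∣ a) : padicValInt p a = padicValInt p b := by
  have hb : ¬ (p : ℤ) ^ N ∣ b := fun hb => ha (by simpa using dvd_add hab hb)
  exact le_antisymm (padicValInt_le_of_dvd_sub hab ha)
    (padicValInt_le_of_dvd_sub (dvd_sub_comm.1 hab) hb)

variable (p) in
def padicValZMod {n : ℕ} (x : ZMod n) : ℕ := padicValNat p x.val

variable (p) in
def padicWeight {n : ℕ} (x : ZMod n) : ℚ :=
  if x = 0 then 0 else (p : ℚ) ^ (2 * padicValZMod p x)

@[simp] theorem padicValZMod_zero {n : ℕ} : padicValZMod p (0 : ZMod n) = 0 := by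
  simp [padicValZMod]

@[simp] theorem padicWeight_zero {n : ℕ} : padicWeight p (0 : ZMod n) = 0 := by
  simp [padicWeight]

theorem padicWeight_of_ne_zero {n : ℕ} {x : ZMod n} (hx : x ≠ 0) :
    padicWeight p x = (p : ℚ) ^ (2 * padicValZMod p x) := if_neg hx

theorem padicValZMod_intCast [Fact p.Prime] {N : ℕ} {z : ℤ} (hz : (z : ZMod (p ^ N)) ≠ 0) :
    padicValZMod p (z : ZMod (p ^ N)) = padicValInt p z := by
  have hdvd : ¬ (p : ℤ) ^ N ∣ z := by
    rwa [Ne, ZMod.intCast_zmod_eq_zero_iff_dvd, Nat.cast_pow] at hz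
  rw [padicValZMod, ← padicValInt.of_nat, ZMod.val_intCast, Nat.cast_pow]
  refine (padicValInt_eq_of_dvd_sub ?_ hdvd).symm
  rw [Int.emod_def, sub_sub_cancel]
  exact dvd_mul_right _ _

theorem padicValZMod_neg [Fact p.Prime] {N : ℕ} (x : ZMod (p ^ N)) :
    padicValZMod p (-x) = padicValZMod p x := by
  rcases eq_or_ne x 0 with rfl | hx
  · simp
  have hcast : (((x.val : ℤ)) : ZMod (p ^ N)) = x := by simp
  rw [← hcast, ← Int.cast_neg, padicValZMod_intCast (by simpa [hcast] using hx),
    padicValZMod_intCast (by simpa [hcast] using hx), padicValInt, Int.natAbs_neg]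
  rfl

theorem padicValZMod_of_not_dvd {n : ℕ} {x : ZMod n} (h : ¬ p ∣ x.val) :
    padicValZMod p x = 0 :=
  padicValNat.eq_zero_of_not_dvd h

theorem padicWeight_of_not_dvd {n : ℕ} [NeZero n] {x : ZMod n} (h : ¬ p ∣ x.val) :
    padicWeight p x = 1 := by
  have hx : x ≠ 0 := by rintro rfl; simp at h
  rw [padicWeight_of_ne_zero hx, padicValZMod_of_not_dvd h, mul_zero, pow_zero]

end Valuation

section MulP

variable [Fact p.Prime] {N : ℕ}

variable (p N) in
def mulP : ZMod (p ^ N) →+ ZMod (p ^ (N + 1)) :=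
  AddMonoidHom.mk' (fun x => ((p * x.val : ℕ) : ZMod (p ^ (N + 1)))) fun a b => by
    obtain ⟨q, hq⟩ : ∃ q, a.val + b.val = (a + b).val + p ^ N * q :=
      ⟨_, by rw [ZMod.val_add, Nat.mod_add_div]⟩
    have hzero : ((p ^ (N + 1) : ℕ) : ZMod (p ^ (N + 1))) = 0 := ZMod.natCast_self _
    rw [← Nat.cast_add, ← mul_add, hq, mul_add, ← mul_assoc, ← pow_succ', Nat.cast_add,
      Nat.cast_mul (p ^ (N + 1)), hzero, zero_mul, add_zero]

theorem val_mulP (x : ZMod (p ^ N)) : (mulP p N x).val = p * x.val := by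
  refine ZMod.val_cast_of_lt ?_
  rw [pow_succ']
  exact Nat.mul_lt_mul_of_pos_left x.val_lt (Fact.out : p.Prime).pos

theorem mulP_injective : Function.Injective (mulP p N) := fun a b h => by
  have h := congrArg ZMod.val h
  rw [val_mulP, val_mulP] at h
  exact ZMod.val_injective _ (Nat.eq_of_mul_eq_mul_left (Fact.out : p.Prime).pos h)

theorem mulP_eq_zero_iff {x : ZMod (p ^ N)} : mulP p N x = 0 ↔ x = 0 :=
  map_eq_zero_iff _ mulP_injective

theorem dvd_val_iff_mem_range_mulP {d : ZMod (p ^ (N + 1))} :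
    p ∣ d.val ↔ d ∈ Set.range (mulP p N) := by
  constructor
  · rintro ⟨c, hc⟩
    have hc' : c < p ^ N := by
      have := d.val_lt
      rw [hc, pow_succ'] at this
      exact Nat.lt_of_mul_lt_mul_left this
    exact ⟨c, ZMod.val_injective _ (by rw [val_mulP, ZMod.val_cast_of_lt hc', hc])⟩
  · rintro ⟨x, rfl⟩
    exact ⟨x.val, val_mulP x⟩

theorem padicValZMod_mulP {x : ZMod (p ^ N)} (hx : x ≠ 0) :
    padicValZMod p (mulP p N x) = padicValZMod p x + 1 := by
  have hp := (Fact.out : p.Prime)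
  rw [padicValZMod, val_mulP, padicValNat.mul hp.ne_zero ((ZMod.val_ne_zero x).2 hx),
    padicValNat_self, add_comm, padicValZMod]

theorem padicWeight_mulP (x : ZMod (p ^ N)) :
    padicWeight p (mulP p N x) = (p : ℚ) ^ 2 * padicWeight p x := by
  rcases eq_or_ne x 0 with rfl | hx
  · simp
  rw [padicWeight_of_ne_zero hx, padicWeight_of_ne_zero (mulP_eq_zero_iff.not.2 hx),
    padicValZMod_mulP hx, ← pow_add]
  ring_nf

theorem not_dvd_val_sub_mulP {e : ZMod (p ^ (N + 1))} (he : ¬ p ∣ e.val) (x : ZMod (p ^ N)) :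
    ¬ p ∣ (e - mulP p N x).val := fun h => he <| by
  rw [← sub_add_cancel e (mulP p N x), ZMod.val_add]
  exact (Nat.dvd_mod_iff (dvd_pow_self p N.succ_ne_zero)).2 (dvd_add h ⟨x.val, val_mulP x⟩)

theorem sum_eq_sum_not_dvd_add_sum_mulP (g : ZMod (p ^ (N + 1)) → ℚ) :
    ∑ d, g d = ∑ d with ¬ p ∣ d.val, g d + ∑ x, g (mulP p N x) := by
  rw [← sum_filter_not_add_sum_filter univ (fun d : ZMod (p ^ (N + 1)) => p ∣ d.val)]
  congr 1
  have hfilter : ({d | p ∣ d.val} : Finset (ZMod (p ^ (N + 1)))) =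
      univ.map ⟨mulP p N, mulP_injective⟩ := by
    ext d
    simp [dvd_val_iff_mem_range_mulP]
  rw [hfilter, sum_map]
  rfl

end MulP

section Sums

theorem sum_one_zmod (n : ℕ) [NeZero n] : ∑ _x : ZMod n, (1 : ℚ) = n := by
  simp [ZMod.card]

theorem sum_padicWeight_sub {n : ℕ} [NeZero n] (e : ZMod n) :
    ∑ x, padicWeight p (e - x) = ∑ x : ZMod n, padicWeight p x :=
  (Equiv.subLeft e).sum_comp (padicWeight p)

theorem sum_padicValZMod_sub {n : ℕ} [NeZero n] (b : ZMod n) :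
    ∑ k, (padicValZMod p (k - b) : ℚ) = ∑ k : ZMod n, (padicValZMod p k : ℚ) :=
  (Equiv.subRight b).sum_comp fun k => (padicValZMod p k : ℚ)

theorem sum_padicWeight_sub_mul_padicValZMod_sub {n : ℕ} [NeZero n] (a b : ZMod n) :
    ∑ k, padicWeight p (a - k) * padicValZMod p (k - b) =
      ∑ k, padicWeight p (a - b - k) * padicValZMod p k :=
  Fintype.sum_equiv (Equiv.subRight b) _ _ fun k => by simp [sub_sub_sub_cancel_right]

instance : Subsingleton (ZMod (p ^ 0)) := ZMod.subsingleton_iff.2 (pow_zero p)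

variable [Fact p.Prime]

theorem sum_mul_padicValZMod_mulP {N : ℕ} (f : ZMod (p ^ N) → ℚ) :
    ∑ x, f x * padicValZMod p (mulP p N x) = ∑ x, f x * (padicValZMod p x + 1) - f 0 := by
  have hpt : ∀ x, f x * padicValZMod p (mulP p N x) =
      f x * (padicValZMod p x + 1) - if x = 0 then f x else 0 := by
    intro x
    rcases eq_or_ne x 0 with rfl | hx
    · simp
    · rw [padicValZMod_mulP hx, if_neg hx]
      push_cast
      ring
  rw [sum_congr rfl fun x _ => hpt x, sum_sub_distrib, sum_ite_eq' univ, if_pos (mem_univ _)]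

theorem sum_padicValZMod (N : ℕ) :
    ((p : ℚ) - 1) * ∑ x : ZMod (p ^ N), (padicValZMod p x : ℚ) = p ^ N - 1 - N * (p - 1) := by
  induction N with
  | zero => rw [Fintype.sum_subsingleton _ 0, padicValZMod_zero]; simp
  | succ N ih =>
    have hunits : ∑ d : ZMod (p ^ (N + 1)) with ¬ p ∣ d.val, (padicValZMod p d : ℚ) = 0 :=
      sum_eq_zero fun d hd => by simp [padicValZMod_of_not_dvd (mem_filter.1 hd).2]
    have hmulP := sum_mul_padicValZMod_mulP (p := p) (N := N) fun _ => 1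
    simp only [one_mul] at hmulP
    rw [sum_eq_sum_not_dvd_add_sum_mulP, hunits, zero_add, hmulP, sum_add_distrib,
      sum_one_zmod]
    push_cast
    linear_combination ih

theorem sum_padicWeight (N : ℕ) :
    (p : ℚ) * ∑ x : ZMod (p ^ N), padicWeight p x = p ^ N * (p ^ N - 1) := by
  induction N with
  | zero => rw [Fintype.sum_subsingleton _ 0, padicWeight_zero]; simp
  | succ N ih =>
    have hcard := sum_eq_sum_not_dvd_add_sum_mulP (p := p) (N := N) fun _ => 1
    have hunits : ∑ d : ZMod (p ^ (N + 1)) with ¬ p ∣ d.val, padicWeight p d =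
        ∑ d : ZMod (p ^ (N + 1)) with ¬ p ∣ d.val, 1 :=
      sum_congr rfl fun d hd => padicWeight_of_not_dvd (mem_filter.1 hd).2
    rw [sum_one_zmod, sum_one_zmod] at hcard
    rw [sum_eq_sum_not_dvd_add_sum_mulP, hunits]
    simp only [padicWeight_mulP, ← mul_sum]
    push_cast at hcard
    linear_combination (p : ℚ) ^ 2 * ih - (p : ℚ) * hcard

theorem sum_padicWeight_sub_mul_padicValZMod_eq_sum_mulP {N : ℕ} (e : ZMod (p ^ (N + 1))) :
    ∑ k, padicWeight p (e - k) * padicValZMod p k =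
      ∑ x, padicWeight p (e - mulP p N x) * padicValZMod p (mulP p N x) := by
  rw [sum_eq_sum_not_dvd_add_sum_mulP, sum_eq_zero, zero_add]
  intro k hk
  rw [padicValZMod_of_not_dvd (mem_filter.1 hk).2, Nat.cast_zero, mul_zero]

theorem sum_padicWeight_mulP_sub_mul_padicValZMod {N : ℕ} (e : ZMod (p ^ N)) :
    ∑ k, padicWeight p (mulP p N e - k) * padicValZMod p k =
      (p : ℚ) ^ 2 * (∑ k, padicWeight p (e - k) * padicValZMod p k +
        ∑ x : ZMod (p ^ N), padicWeight p x - padicWeight p e) := by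
  rw [sum_padicWeight_sub_mul_padicValZMod_eq_sum_mulP]
  simp only [← map_sub, padicWeight_mulP, mul_assoc]
  rw [← mul_sum, sum_mul_padicValZMod_mulP, sub_zero]
  simp only [mul_add_one, sum_add_distrib, sum_padicWeight_sub]

theorem sum_padicWeight_sub_mul_padicValZMod (N : ℕ) (e : ZMod (p ^ N)) :
    (p : ℚ) * (p - 1) * ∑ k, padicWeight p (e - k) * padicValZMod p k =
      if e = 0 then (p : ℚ) ^ N * ((N - 1) * p ^ (N + 1) - N * p ^ N + p)
      else (p : ℚ) ^ (N + 1) - p ^ (2 * padicValZMod p e + 1) * (1 + N * (p - 1)) +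
        padicValZMod p e * (p - 1) * p ^ (2 * N) := by
  induction N with
  | zero =>
    rw [Fintype.sum_subsingleton _ 0, Subsingleton.elim e 0, sub_zero, padicWeight_zero,
      if_pos rfl]
    simp
  | succ N ih =>
    by_cases he : p ∣ e.val
    · obtain ⟨e, rfl⟩ := dvd_val_iff_mem_range_mulP.1 he
      have hU := sum_padicWeight (p := p) N
      rw [sum_padicWeight_mulP_sub_mul_padicValZMod]
      rcases eq_or_ne e 0 with rfl | he0
      · have ih0 := ih 0
        rw [if_pos rfl] at ih0
        rw [map_zero, if_pos rfl, padicWeight_zero]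
        push_cast
        linear_combination (p : ℚ) ^ 2 * ih0 + (p : ℚ) ^ 2 * (p - 1) * hU
      · have ihe := ih e
        rw [if_neg he0] at ihe
        rw [if_neg (mulP_eq_zero_iff.not.2 he0), padicValZMod_mulP he0,
          padicWeight_of_ne_zero he0]
        push_cast
        linear_combination (p : ℚ) ^ 2 * ihe + (p : ℚ) ^ 2 * (p - 1) * hU
    · have he0 : e ≠ 0 := by rintro rfl; simp at he
      have hV := sum_padicValZMod (p := p) N
      rw [sum_padicWeight_sub_mul_padicValZMod_eq_sum_mulP]
      simp only [padicWeight_of_not_dvd (not_dvd_val_sub_mulP he _)]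
      rw [sum_mul_padicValZMod_mulP fun _ => 1, if_neg he0, padicValZMod_of_not_dvd he]
      simp only [one_mul, sum_add_distrib, sum_one_zmod]
      push_cast
      linear_combination (p : ℚ) * hV

end Sums

section Blocks

/- With `r = n + 1` and the indices read in `ℤ/p^r` (first block) and `ℤ/p^{r-1}` (second
block), `mEntry` and `bEntry` are the entries of `M(p^r)` and `B`, and the `scaledInv` functions
are the blocks of `p^{2r-1}(p+1) T₀⁻¹`. The paper's constants are `pr - r + 1 = kappa p r` and
`pr + p - r = kappa p (r + 1)`. -/

variable (p)

def kappa (r : ℕ) : ℚ := ((p : ℚ) - 1) * r + 1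

def mEntry (n : ℕ) (x y : ZMod (p ^ (n + 1))) : ℚ :=
  padicWeight p (x - y) - (p : ℚ) ^ (2 * n + 1) * if x = y then 1 else 0

def bEntry (n : ℕ) (i j : ZMod (p ^ n)) : ℚ :=
  (p : ℚ) ^ 2 * padicWeight p (i - j) - (p : ℚ) ^ (2 * n + 1) * if i = j then 1 else 0

def scaledInvLL (n : ℕ) (x y : ZMod (p ^ (n + 1))) : ℚ :=
  -kappa p (n + 1) + (p - 1) * (padicValZMod p x + padicValZMod p y - padicValZMod p (x - y)) -
    kappa p (n + 1) * if x = y then 1 else 0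

def scaledInvLR (n : ℕ) (x : ZMod (p ^ (n + 1))) : ℚ :=
  -kappa p (n + 1) + (p - 1) * padicValZMod p x

def scaledInvRR (n : ℕ) (i j : ZMod (p ^ n)) : ℚ :=
  -kappa p (n + 2) - (p - 1) * padicValZMod p (i - j) +
    (kappa p (n + 2) - 2 * kappa p (n + 1)) * if i = j then 1 else 0

def T0ZMod (n : ℕ) :
    Matrix ({x : ZMod (p ^ (n + 1)) // x ≠ 0} ⊕ ZMod (p ^ n))
      ({x : ZMod (p ^ (n + 1)) // x ≠ 0} ⊕ ZMod (p ^ n)) ℚ :=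
  Matrix.fromBlocks (Matrix.of fun x y => mEntry p n x y) (Matrix.of fun _ _ => 1)
    (Matrix.of fun _ _ => 1) (Matrix.of (bEntry p n))

def scaledInvZMod (n : ℕ) :
    Matrix ({x : ZMod (p ^ (n + 1)) // x ≠ 0} ⊕ ZMod (p ^ n))
      ({x : ZMod (p ^ (n + 1)) // x ≠ 0} ⊕ ZMod (p ^ n)) ℚ :=
  Matrix.fromBlocks (Matrix.of fun x y => scaledInvLL p n x y)
    (Matrix.of fun x _ => scaledInvLR p n x) (Matrix.of fun _ y => scaledInvLR p n y)
    (Matrix.of (scaledInvRR p n))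

variable {p} [Fact p.Prime] (n : ℕ)

theorem natCast_mul_sub_one_ne_zero : (p : ℚ) * (p - 1) ≠ 0 := by
  have : (1 : ℚ) < p := by exact_mod_cast (Fact.out : p.Prime).one_lt
  exact mul_ne_zero (by positivity) (by linarith)

theorem scaledInvLL_zero_left {b : ZMod (p ^ (n + 1))} (hb : b ≠ 0) :
    scaledInvLL p n 0 b = -kappa p (n + 1) := by
  simp [scaledInvLL, padicValZMod_neg, Ne.symm hb]

theorem sum_mEntry_mul_scaledInvLL {a b : ZMod (p ^ (n + 1))} (ha : a ≠ 0) (hb : b ≠ 0) :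
    ∑ k, mEntry p n a k * scaledInvLL p n k b - mEntry p n a 0 * scaledInvLL p n 0 b +
      p ^ n * scaledInvLR p n b = if a = b then (p : ℚ) ^ (2 * n + 1) * (p + 1) else 0 := by
  have hpt : ∀ k, mEntry p n a k * scaledInvLL p n k b =
      (-kappa p (n + 1) + (p - 1) * padicValZMod p b) * padicWeight p (a - k) +
      (p - 1) * (padicWeight p (a - k) * padicValZMod p k) -
      (p - 1) * (padicWeight p (a - k) * padicValZMod p (k - b)) -
      (if k = b then kappa p (n + 1) * padicWeight p (a - k) else 0) -
      (if a = k then (p : ℚ) ^ (2 * n + 1) * scaledInvLL p n k b else 0) := by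
    intro k
    simp only [mEntry, scaledInvLL]
    split_ifs <;> ring
  have hzero : mEntry p n a 0 = padicWeight p a := by simp [mEntry, ha]
  rw [hzero, scaledInvLL_zero_left n hb, sum_congr rfl fun k _ => hpt k]
  simp only [sum_add_distrib, sum_sub_distrib, ← mul_sum, sum_ite_eq, sum_ite_eq', mem_univ,
    if_true, sum_padicWeight_sub, sum_padicWeight_sub_mul_padicValZMod_sub]
  have hU := sum_padicWeight (p := p) (n + 1)
  have hFa := sum_padicWeight_sub_mul_padicValZMod (n + 1) a
  have hFab := sum_padicWeight_sub_mul_padicValZMod (n + 1) (a - b)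
  rw [if_neg ha] at hFa
  apply mul_left_cancel₀ (natCast_mul_sub_one_ne_zero (p := p))
  rcases eq_or_ne a b with rfl | hab
  · rw [sub_self, if_pos rfl] at hFab
    simp only [sub_self, padicWeight_zero, scaledInvLL, scaledInvLR, kappa, padicValZMod_zero]
    rw [padicWeight_of_ne_zero ha]
    push_cast at hFa hFab hU ⊢
    linear_combination ((p : ℚ) - 1) * (-(((p : ℚ) - 1) * (n + 1) + 1) +
      (p - 1) * padicValZMod p a) * hU + ((p : ℚ) - 1) * hFa - ((p : ℚ) - 1) * hFab
  · rw [if_neg (sub_ne_zero.2 hab)] at hFab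
    simp only [if_neg hab, scaledInvLL, scaledInvLR, kappa]
    rw [padicWeight_of_ne_zero ha, padicWeight_of_ne_zero (sub_ne_zero.2 hab)]
    push_cast at hFa hFab hU ⊢
    linear_combination ((p : ℚ) - 1) * (-(((p : ℚ) - 1) * (n + 1) + 1) +
      (p - 1) * padicValZMod p b) * hU + ((p : ℚ) - 1) * hFa - ((p : ℚ) - 1) * hFab

theorem sum_mEntry_mul_scaledInvLR {a : ZMod (p ^ (n + 1))} (ha : a ≠ 0) (j : ZMod (p ^ n)) :
    ∑ k, mEntry p n a k * scaledInvLR p n k - mEntry p n a 0 * scaledInvLR p n 0 +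
      ∑ k, scaledInvRR p n k j = 0 := by
  have hpt : ∀ k, mEntry p n a k * scaledInvLR p n k =
      -kappa p (n + 1) * padicWeight p (a - k) +
      (p - 1) * (padicWeight p (a - k) * padicValZMod p k) -
      (if a = k then (p : ℚ) ^ (2 * n + 1) * scaledInvLR p n k else 0) := by
    intro k
    simp only [mEntry, scaledInvLR]
    split_ifs <;> ring
  have hptRR : ∀ k, scaledInvRR p n k j =
      -kappa p (n + 2) - (p - 1) * padicValZMod p (k - j) +
      (if k = j then kappa p (n + 2) - 2 * kappa p (n + 1) else 0) := by
    intro k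
    simp only [scaledInvRR]
    split_ifs <;> ring
  have hzero : mEntry p n a 0 = padicWeight p a := by simp [mEntry, ha]
  rw [hzero, sum_congr rfl fun k _ => hpt k, sum_congr rfl fun k _ => hptRR k]
  simp only [sum_add_distrib, sum_sub_distrib, ← mul_sum, sum_ite_eq, sum_ite_eq', mem_univ,
    if_true, sum_padicWeight_sub, sum_padicValZMod_sub, sum_const, card_univ, ZMod.card,
    nsmul_eq_mul]
  have hU := sum_padicWeight (p := p) (n + 1)
  have hV := sum_padicValZMod (p := p) n
  have hFa := sum_padicWeight_sub_mul_padicValZMod (n + 1) a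
  rw [if_neg ha] at hFa
  apply mul_left_cancel₀ (natCast_mul_sub_one_ne_zero (p := p))
  simp only [scaledInvLR, kappa, padicValZMod_zero]
  rw [padicWeight_of_ne_zero ha]
  push_cast at hFa hU hV ⊢
  linear_combination -((p : ℚ) - 1) * (((p : ℚ) - 1) * (n + 1) + 1) * hU +
    ((p : ℚ) - 1) * hFa - (p : ℚ) * (p - 1) * hV

theorem sum_scaledInvLL_add_sum_bEntry_mul {b : ZMod (p ^ (n + 1))} (hb : b ≠ 0)
    (i : ZMod (p ^ n)) :
    ∑ k, scaledInvLL p n k b - scaledInvLL p n 0 b +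
      ∑ k, bEntry p n i k * scaledInvLR p n b = 0 := by
  have hptLL : ∀ k, scaledInvLL p n k b =
      -kappa p (n + 1) + (p - 1) * padicValZMod p b + (p - 1) * padicValZMod p k -
      (p - 1) * padicValZMod p (k - b) - (if k = b then kappa p (n + 1) else 0) := by
    intro k
    simp only [scaledInvLL]
    split_ifs <;> ring
  have hptB : ∀ k, bEntry p n i k =
      (p : ℚ) ^ 2 * padicWeight p (i - k) - (if i = k then (p : ℚ) ^ (2 * n + 1) else 0) := by
    intro k
    simp only [bEntry]
    split_ifs <;> ring
  rw [scaledInvLL_zero_left n hb, sum_congr rfl fun k _ => hptLL k, ← sum_mul,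
    sum_congr rfl fun k _ => hptB k]
  simp only [sum_add_distrib, sum_sub_distrib, ← mul_sum, sum_ite_eq, sum_ite_eq', mem_univ,
    if_true, sum_padicWeight_sub, sum_padicValZMod_sub, sum_const, card_univ, ZMod.card,
    nsmul_eq_mul]
  have hU := sum_padicWeight (p := p) n
  apply mul_left_cancel₀ (Nat.cast_ne_zero.2 (Fact.out : p.Prime).ne_zero : (p : ℚ) ≠ 0)
  simp only [scaledInvLR, kappa]
  push_cast at hU ⊢
  linear_combination (p : ℚ) ^ 2 * (-(((p : ℚ) - 1) * (n + 1) + 1) +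
    (p - 1) * padicValZMod p b) * hU

theorem sum_scaledInvLR_add_sum_bEntry_mul_scaledInvRR (i j : ZMod (p ^ n)) :
    ∑ k, scaledInvLR p n k - scaledInvLR p n 0 + ∑ k, bEntry p n i k * scaledInvRR p n k j =
      if i = j then (p : ℚ) ^ (2 * n + 1) * (p + 1) else 0 := by
  have hpt : ∀ k, bEntry p n i k * scaledInvRR p n k j =
      -kappa p (n + 2) * (p : ℚ) ^ 2 * padicWeight p (i - k) -
      (p - 1) * (p : ℚ) ^ 2 * (padicWeight p (i - k) * padicValZMod p (k - j)) +
      (if k = j then (kappa p (n + 2) - 2 * kappa p (n + 1)) * (p : ℚ) ^ 2 *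
        padicWeight p (i - k) else 0) -
      (if i = k then (p : ℚ) ^ (2 * n + 1) * scaledInvRR p n k j else 0) := by
    intro k
    simp only [bEntry, scaledInvRR]
    split_ifs <;> ring
  rw [sum_congr rfl fun k _ => hpt k]
  simp only [scaledInvLR, sum_add_distrib, sum_sub_distrib, ← mul_sum, sum_ite_eq, sum_ite_eq',
    mem_univ, if_true, sum_padicWeight_sub, sum_padicWeight_sub_mul_padicValZMod_sub, sum_const,
    card_univ, ZMod.card, nsmul_eq_mul]
  have hU := sum_padicWeight (p := p) n
  have hV := sum_padicValZMod (p := p) (n + 1)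
  have hF := sum_padicWeight_sub_mul_padicValZMod n (i - j)
  apply mul_left_cancel₀ (natCast_mul_sub_one_ne_zero (p := p))
  rcases eq_or_ne i j with rfl | hij
  · rw [sub_self, if_pos rfl] at hF
    simp only [sub_self, padicWeight_zero, scaledInvRR, kappa, padicValZMod_zero]
    push_cast at hF hU hV ⊢
    linear_combination (p : ℚ) * (p - 1) * hV -
      (p : ℚ) ^ 2 * (p - 1) * (((p : ℚ) - 1) * (n + 2) + 1) * hU - (p : ℚ) ^ 2 * (p - 1) * hF
  · rw [if_neg (sub_ne_zero.2 hij)] at hF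
    simp only [if_neg hij, scaledInvRR, kappa, padicValZMod_zero]
    rw [padicWeight_of_ne_zero (sub_ne_zero.2 hij)]
    push_cast at hF hU hV ⊢
    linear_combination (p : ℚ) * (p - 1) * hV -
      (p : ℚ) ^ 2 * (p - 1) * (((p : ℚ) - 1) * (n + 2) + 1) * hU - (p : ℚ) ^ 2 * (p - 1) * hF

theorem sum_subtype_ne {ι M : Type*} [Fintype ι] [DecidableEq ι] [AddCommGroup M]
    (f : ι → M) (a : ι) : ∑ k : {x // x ≠ a}, f k = ∑ k, f k - f a := by
  rw [← sum_subtype (univ.erase a) (fun x => by simp) f, sum_erase_eq_sub (mem_univ a)]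

theorem T0ZMod_mul_scaledInvZMod :
    T0ZMod p n * scaledInvZMod p n = ((p : ℚ) ^ (2 * n + 1) * (p + 1)) • 1 := by
  ext (a | a) (b | b)
  all_goals simp only [T0ZMod, scaledInvZMod, Matrix.mul_apply, Fintype.sum_sum_type,
    Matrix.fromBlocks_apply₁₁, Matrix.fromBlocks_apply₁₂, Matrix.fromBlocks_apply₂₁,
    Matrix.fromBlocks_apply₂₂, Matrix.of_apply, Matrix.smul_apply, Matrix.one_apply, one_mul]
  · rw [sum_subtype_ne (fun k => mEntry p n a k * scaledInvLL p n k b)]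
    simpa [Subtype.ext_iff, ZMod.card] using sum_mEntry_mul_scaledInvLL n a.2 b.2
  · rw [sum_subtype_ne (fun k => mEntry p n a k * scaledInvLR p n k)]
    simpa using sum_mEntry_mul_scaledInvLR n a.2 b
  · rw [sum_subtype_ne (fun k => scaledInvLL p n k b)]
    simpa [← sum_mul] using sum_scaledInvLL_add_sum_bEntry_mul n b.2 a
  · rw [sum_subtype_ne (fun k => scaledInvLR p n k)]
    simpa using sum_scaledInvLR_add_sum_bEntry_mul_scaledInvRR n a b

theorem T0ZMod_mul_inv_smul_scaledInvZMod :
    T0ZMod p n * (((p : ℚ) ^ (2 * n + 1) * (p + 1))⁻¹ • scaledInvZMod p n) = 1 := by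
  have hD : (p : ℚ) ^ (2 * n + 1) * (p + 1) ≠ 0 := by
    have := (Fact.out : p.Prime).pos
    positivity
  rw [Matrix.mul_smul, T0ZMod_mul_scaledInvZMod, smul_smul, inv_mul_cancel₀ hD, one_smul]

end Blocks

section Reindex

def finEquivZMod (N : ℕ) [NeZero N] : Fin N ≃ ZMod N where
  toFun i := (i : ℕ)
  invFun x := ⟨x.val, x.val_lt⟩
  left_inv i := Fin.ext (ZMod.val_cast_of_lt i.isLt)
  right_inv x := ZMod.natCast_zmod_val x

theorem padicValZMod_finEquivZMod {N : ℕ} [NeZero N] (i : Fin N) :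
    padicValZMod p (finEquivZMod N i) = padicValNat p i := by
  simp [padicValZMod, finEquivZMod, ZMod.val_cast_of_lt i.isLt]

variable [Fact p.Prime]

theorem padicValZMod_finEquivZMod_sub {N : ℕ} {i j : Fin (p ^ N)} (hij : i ≠ j) :
    padicValZMod p (finEquivZMod _ i - finEquivZMod _ j) = padicValInt p ((i : ℤ) - j) := by
  have hcast : finEquivZMod _ i - finEquivZMod _ j = (((i : ℤ) - j : ℤ) : ZMod (p ^ N)) := by
    simp [finEquivZMod]
  rw [hcast, padicValZMod_intCast]
  rw [← hcast, sub_ne_zero]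
  exact (finEquivZMod _).injective.ne hij

theorem padicWeight_finEquivZMod_sub {N : ℕ} (i j : Fin (p ^ N)) :
    padicWeight p (finEquivZMod _ i - finEquivZMod _ j) =
      if i = j then 0 else (p : ℚ) ^ (2 * padicValInt p ((i : ℤ) - j)) := by
  split_ifs with hij
  · rw [hij, sub_self, padicWeight_zero]
  · rw [padicWeight_of_ne_zero (sub_ne_zero.2 ((finEquivZMod _).injective.ne hij)),
      padicValZMod_finEquivZMod_sub hij]

variable (p) in
def blockEquiv (n : ℕ) :
    ({i : Fin (p ^ (n + 1)) // (i : ℕ) ≠ 0} ⊕ Fin (p ^ n)) ≃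
      ({x : ZMod (p ^ (n + 1)) // x ≠ 0} ⊕ ZMod (p ^ n)) :=
  ((finEquivZMod _).subtypeEquiv fun i => by
      rw [Ne, Ne, ← ZMod.val_eq_zero]
      simp [finEquivZMod, ZMod.val_cast_of_lt i.isLt]).sumCongr (finEquivZMod _)

theorem T0_eq_submatrix (n : ℕ) :
    T0 p (n + 1) = (T0ZMod p n).submatrix (blockEquiv p n) (blockEquiv p n) := by
  have hexp : 2 * (n + 1) - 1 = 2 * n + 1 := by omega
  ext (i | i) (j | j)
  all_goals simp only [T0, T0ZMod, MprSub, Mpr, Bmat, mEntry, bEntry, blockEquiv, hexp,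
    padicWeight_finEquivZMod_sub, Matrix.submatrix_apply, Matrix.fromBlocks_apply₁₁,
    Matrix.fromBlocks_apply₁₂, Matrix.fromBlocks_apply₂₁, Matrix.fromBlocks_apply₂₂,
    Matrix.of_apply, Equiv.sumCongr_apply, Sum.map_inl, Sum.map_inr, Equiv.subtypeEquiv_apply,
    Equiv.apply_eq_iff_eq]
  all_goals split_ifs <;> ring

theorem scaledInvLL_finEquivZMod (n : ℕ) (i j : Fin (p ^ (n + 1))) :
    scaledInvLL p n (finEquivZMod _ i) (finEquivZMod _ j) =
      if i = j then -2 * kappa p (n + 1) + 2 * (p - 1) * padicValNat p i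
      else -kappa p (n + 1) -
        (p - 1) * (padicValInt p ((i : ℤ) - j) - padicValNat p i - padicValNat p j) := by
  simp only [scaledInvLL, Equiv.apply_eq_iff_eq, padicValZMod_finEquivZMod]
  split_ifs with hij
  · rw [hij, sub_self, padicValZMod_zero]
    ring
  · rw [padicValZMod_finEquivZMod_sub hij]
    ring

theorem scaledInvRR_finEquivZMod (n : ℕ) (i j : Fin (p ^ n)) :
    scaledInvRR p n (finEquivZMod _ i) (finEquivZMod _ j) =
      if i = j then -2 * kappa p (n + 1)
      else -kappa p (n + 2) - (p - 1) * padicValInt p ((i : ℤ) - j) := by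
  simp only [scaledInvRR, Equiv.apply_eq_iff_eq]
  split_ifs with hij
  · rw [hij, sub_self, padicValZMod_zero]
    ring
  · rw [padicValZMod_finEquivZMod_sub hij]
    ring

end Reindex

/-- For a prime `p` and `r ≥ 1`, `T₀` is invertible over `ℚ` and its
inverse has the entries described in Theorem "Entries of Inv Int Matrix". -/
theorem stmt15 (p r : ℕ) (hp : p.Prime) (hr : 1 ≤ r) :
    IsUnit (T0 p r) ∧
    (∀ i j : {i : Fin (p ^ r) // (i : ℕ) ≠ 0},
      (T0 p r)⁻¹ (Sum.inl i) (Sum.inl j) =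
        if i = j then
          -2 * (p : ℚ) ^ (1 - 2 * (r : ℤ)) * ((p : ℚ) * r - r + 1) / ((p : ℚ) + 1) +
            2 * (p : ℚ) ^ (1 - 2 * (r : ℤ)) * ((p : ℚ) - 1) *
              (padicValNat p (i.1 : ℕ) : ℚ) / ((p : ℚ) + 1)
        else
          -(p : ℚ) ^ (1 - 2 * (r : ℤ)) * ((p : ℚ) * r - r + 1) / ((p : ℚ) + 1) -
            ((p : ℚ) ^ (1 - 2 * (r : ℤ)) * ((p : ℚ) - 1) / ((p : ℚ) + 1)) *
              ((padicValInt p ((i.1 : ℤ) - (j.1 : ℤ)) : ℚ) -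
                (padicValNat p (i.1 : ℕ) : ℚ) - (padicValNat p (j.1 : ℕ) : ℚ))) ∧
    (∀ (i : {i : Fin (p ^ r) // (i : ℕ) ≠ 0}) (j : Fin (p ^ (r - 1))),
      (T0 p r)⁻¹ (Sum.inl i) (Sum.inr j) =
        -(p : ℚ) ^ (1 - 2 * (r : ℤ)) * ((p : ℚ) * r - r + 1) / ((p : ℚ) + 1) +
          (p : ℚ) ^ (1 - 2 * (r : ℤ)) * ((p : ℚ) - 1) *
            (padicValNat p (i.1 : ℕ) : ℚ) / ((p : ℚ) + 1)) ∧
    (∀ (i : Fin (p ^ (r - 1))) (j : {i : Fin (p ^ r) // (i : ℕ) ≠ 0}),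
      (T0 p r)⁻¹ (Sum.inr i) (Sum.inl j) =
        -(p : ℚ) ^ (1 - 2 * (r : ℤ)) * ((p : ℚ) * r - r + 1) / ((p : ℚ) + 1) +
          (p : ℚ) ^ (1 - 2 * (r : ℤ)) * ((p : ℚ) - 1) *
            (padicValNat p (j.1 : ℕ) : ℚ) / ((p : ℚ) + 1)) ∧
    (∀ i j : Fin (p ^ (r - 1)),
      (T0 p r)⁻¹ (Sum.inr i) (Sum.inr j) =
        if i = j then
          -2 * (p : ℚ) ^ (1 - 2 * (r : ℤ)) * ((p : ℚ) * r - r + 1) / ((p : ℚ) + 1)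
        else
          -(p : ℚ) ^ (1 - 2 * (r : ℤ)) * ((p : ℚ) * r + p - r) / ((p : ℚ) + 1) -
            (p : ℚ) ^ (1 - 2 * (r : ℤ)) * ((p : ℚ) - 1) *
              (padicValInt p ((i : ℤ) - (j : ℤ)) : ℚ) / ((p : ℚ) + 1)) := by
  have := Fact.mk hp
  obtain ⟨n, rfl⟩ : ∃ n, r = n + 1 := ⟨r - 1, by omega⟩
  have hmul := T0ZMod_mul_inv_smul_scaledInvZMod (p := p) n
  have hzpow : (p : ℚ) ^ (1 - 2 * ((n + 1 : ℕ) : ℤ)) = ((p : ℚ) ^ (2 * n + 1))⁻¹ := by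
    rw [← zpow_natCast, ← zpow_neg]
    push_cast
    ring_nf
  have hp0 : (p : ℚ) ≠ 0 := Nat.cast_ne_zero.2 hp.ne_zero
  rw [T0_eq_submatrix, Matrix.isUnit_submatrix_equiv, Matrix.inv_submatrix_equiv,
    Matrix.inv_eq_right_inv hmul, hzpow]
  refine ⟨(Matrix.isUnit_iff_isUnit_det _).2 (Matrix.isUnit_det_of_right_inverse hmul),
    fun i j => ?_, fun i j => ?_, fun i j => ?_, fun i j => ?_⟩
  all_goals simp only [Matrix.submatrix_apply, Matrix.smul_apply, blockEquiv, scaledInvZMod,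
    Equiv.sumCongr_apply, Sum.map_inl, Sum.map_inr, Equiv.subtypeEquiv_apply,
    Matrix.fromBlocks_apply₁₁, Matrix.fromBlocks_apply₁₂, Matrix.fromBlocks_apply₂₁,
    Matrix.fromBlocks_apply₂₂, Matrix.of_apply, scaledInvLL_finEquivZMod,
    scaledInvRR_finEquivZMod n, scaledInvLR, padicValZMod_finEquivZMod, Subtype.ext_iff,
    kappa, smul_eq_mul, Nat.cast_add, Nat.cast_one, Nat.cast_ofNat]
  · split_ifs <;> field_simp
  · field_simp
  · field_simp
  · split_ifs <;> field_simp
    ring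
end
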